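/- Let L = L₀ ⊕ L₁ be a complex Leibniz superalgebra with dim L₀ = n and dim L₁ = m ≥ 1. If L has nilindex n + m + 1 (i.e. L^{n+m} ≠ 0 and L^{n+m+1} = 0), then either m = n or m = n + 1; more precisely, m = n when n + m is even and m = n + 1 when n + m is odd. -/

import Mathlib

/-- A complex Leibniz superalgebra structure on a vector space `V`:
a bilinear bracket together with an internal ℤ₂-grading `V = L0 ⊕ L1`
such that the bracket respects the grading and the Leibniz superidentity
`[x,[y,z]] = [[x,y],z] − (−1)^{αβ}[[x,z],y]` holds for homogeneous `y, z`. -/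
structure LeibnizSuperAlg (V : Type*) [AddCommGroup V] [Module ℂ V] where
  br : V →ₗ[ℂ] V →ₗ[ℂ] V
  L0 : Submodule ℂ V
  L1 : Submodule ℂ V
  compl : IsCompl L0 L1
  grade00 : ∀ x ∈ L0, ∀ y ∈ L0, br x y ∈ L0
  grade01 : ∀ x ∈ L0, ∀ y ∈ L1, br x y ∈ L1
  grade10 : ∀ x ∈ L1, ∀ y ∈ L0, br x y ∈ L1
  grade11 : ∀ x ∈ L1, ∀ y ∈ L1, br x y ∈ L0
  super_ee : ∀ (x : V), ∀ y ∈ L0, ∀ z ∈ L0,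
    br x (br y z) = br (br x y) z - br (br x z) y
  super_eo : ∀ (x : V), ∀ y ∈ L0, ∀ z ∈ L1,
    br x (br y z) = br (br x y) z - br (br x z) y
  super_oe : ∀ (x : V), ∀ y ∈ L1, ∀ z ∈ L0,
    br x (br y z) = br (br x y) z - br (br x z) y
  super_oo : ∀ (x : V), ∀ y ∈ L1, ∀ z ∈ L1,
    br x (br y z) = br (br x y) z + br (br x z) y

namespace LeibnizSuperAlg

variable {V : Type*} [AddCommGroup V] [Module ℂ V]

/-- The span of all products `[u,v]` with `u ∈ S`, `v ∈ T`. -/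
def prodSpan (A : LeibnizSuperAlg V) (S T : Submodule ℂ V) : Submodule ℂ V :=
  Submodule.span ℂ {z : V | ∃ u ∈ S, ∃ v ∈ T, z = A.br u v}

/-- `A.lcs k` is the `(k+1)`-st term `L^{k+1}` of the descending central series:
`L¹ = L`, `L^{k+1} = [L^k, L]`. -/
def lcs (A : LeibnizSuperAlg V) : ℕ → Submodule ℂ V
  | 0 => ⊤
  | k + 1 => A.prodSpan (lcs A k) ⊤

/-- `A.lcs0 k` is the `(k+1)`-st term `L₀^{k+1}` of the descending central series
of the even part: `L₀¹ = L₀`, `L₀^{k+1} = [L₀^k, L₀]`. -/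
def lcs0 (A : LeibnizSuperAlg V) : ℕ → Submodule ℂ V
  | 0 => A.L0
  | k + 1 => A.prodSpan (lcs0 A k) A.L0

/-- Nilpotency: some term of the descending central series vanishes. -/
def IsNilpotent (A : LeibnizSuperAlg V) : Prop := ∃ s, A.lcs s = ⊥

/-- `S` generates `L`: the smallest subspace containing `S` and closed under the
product is `L` itself. -/
def Generates (A : LeibnizSuperAlg V) (S : Set V) : Prop :=
  ∀ W : Submodule ℂ V, S ⊆ W → (∀ u ∈ W, ∀ v ∈ W, A.br u v ∈ W) → W = ⊤

/-- The operator of right multiplication `R_x : z ↦ [z, x]`. -/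
def R (A : LeibnizSuperAlg V) (x : V) : V →ₗ[ℂ] V := A.br.flip x

end LeibnizSuperAlg

/-!
The central series `L = L¹ ⊋ L² ⊋ ⋯ ⊋ L^{n+m+1} = 0` has `n + m` strict steps in a space of
dimension `n + m`, so every step lowers the dimension by exactly one. In particular `L = ℂx + L²`
for a homogeneous `x`, and the generalised Leibniz rule `[L^a, L^b] ⊆ L^{a+b}` then gives
`L^k = ℂ e_k + L^{k+1}` with `e_k = R_x^{k-1} x`. Every `L^k` is graded, so the dimension lost at
step `k` lies in the parity of `e_k`. For even `x` the odd part is never lost, forcing `L₁ = 0`;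
for odd `x` the parities alternate odd, even, odd, …, whence `m = ⌈(n+m)/2⌉` and `n = ⌊(n+m)/2⌋`.
-/

open Module Submodule

theorem add_le_of_forall_apply_succ_lt {f : ℕ → ℕ} {k : ℕ} (hf : ∀ i < k, f (i + 1) < f i) :
    f k + k ≤ f 0 := by
  induction k with
  | zero => rfl
  | succ k ih =>
    have hk := hf k k.lt_succ_self
    have := ih fun i hi => hf i (by omega)
    omega

namespace Submodule

section Ring

variable {R M : Type*} [Ring R] [AddCommGroup M] [Module R M]

theorem inf_eq_inf_of_le_span_singleton_sup {p q S T : Submodule R M} (hpq : Disjoint p q)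
    (hT : T ⊓ p ⊔ T ⊓ q = T) {e : M} (he : e ∈ p) (hTS : T ≤ S) (hS : S ≤ (R ∙ e) ⊔ T) :
    S ⊓ q = T ⊓ q := by
  refine le_antisymm (fun z ⟨hzS, hzq⟩ => ⟨?_, hzq⟩) (inf_le_inf_right q hTS)
  obtain ⟨y, hy, t, ht, rfl⟩ := mem_sup.1 (hS hzS)
  rw [← hT] at ht
  obtain ⟨tp, htp, tq, htq, rfl⟩ := mem_sup.1 ht
  have hp : y + tp ∈ p := add_mem ((span_singleton_le_iff_mem e p).2 he hy) htp.2
  have hq : y + tp ∈ q := by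
    have := sub_mem hzq htq.2
    rwa [← add_assoc, add_sub_cancel_right] at this
  rw [← add_assoc, disjoint_def.1 hpq _ hp hq, zero_add]
  exact htq.1

end Ring

variable {K M : Type*} [DivisionRing K] [AddCommGroup M] [Module K M] [FiniteDimensional K M]

theorem finrank_inf_add_finrank_inf_eq {p q S : Submodule K M} (hpq : Disjoint p q)
    (hS : S ⊓ p ⊔ S ⊓ q = S) :
    finrank K (S ⊓ p : Submodule K M) + finrank K (S ⊓ q : Submodule K M) = finrank K S := by
  have h := finrank_sup_add_finrank_inf_eq (S ⊓ p) (S ⊓ q)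
  rwa [hS, (hpq.mono inf_le_right inf_le_right).eq_bot, finrank_bot, add_zero, eq_comm] at h

theorem exists_le_span_singleton_sup {U W : Submodule K M} (hWU : W ≤ U)
    (h : finrank K U ≤ finrank K W + 1) : ∃ x ∈ U, U ≤ (K ∙ x) ⊔ W := by
  by_cases hUW : U ≤ W
  · exact ⟨0, U.zero_mem, hUW.trans le_sup_right⟩
  obtain ⟨x, hxU, hxW⟩ := SetLike.not_le_iff_exists.1 hUW
  have hlt : W < (K ∙ x) ⊔ W := lt_of_le_of_ne le_sup_right fun hEq =>
    hxW (hEq ▸ mem_sup_left (mem_span_singleton_self x))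
  have hle : (K ∙ x) ⊔ W ≤ U := sup_le ((span_singleton_le_iff_mem x U).2 hxU) hWU
  have := finrank_lt_finrank_of_lt hlt
  exact ⟨x, hxU, (eq_of_le_of_finrank_le hle (by omega)).ge⟩

end Submodule

namespace LeibnizSuperAlg

variable {V : Type*} [AddCommGroup V] [Module ℂ V] {A : LeibnizSuperAlg V}

variable (A) in
def IsHomogeneous (x : V) : Prop := x ∈ A.L0 ∨ x ∈ A.L1

variable (A) in
def IsGraded (S : Submodule ℂ V) : Prop := S ⊓ A.L0 ⊔ S ⊓ A.L1 = S

theorem IsHomogeneous.br {x y : V} (hx : A.IsHomogeneous x) (hy : A.IsHomogeneous y) :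
    A.IsHomogeneous (A.br x y) := by
  rcases hx with hx | hx <;> rcases hy with hy | hy
  exacts [.inl (A.grade00 x hx y hy), .inr (A.grade01 x hx y hy), .inr (A.grade10 x hx y hy),
    .inl (A.grade11 x hx y hy)]

theorem br_br_mem_of_isHomogeneous {W : Submodule ℂ V} (x : V) {y z : V}
    (hy : A.IsHomogeneous y) (hz : A.IsHomogeneous z)
    (hxyz : A.br (A.br x y) z ∈ W) (hxzy : A.br (A.br x z) y ∈ W) : A.br x (A.br y z) ∈ W := by
  rcases hy with hy | hy <;> rcases hz with hz | hz
  · rw [A.super_ee x y hy z hz]; exact sub_mem hxyz hxzy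
  · rw [A.super_eo x y hy z hz]; exact sub_mem hxyz hxzy
  · rw [A.super_oe x y hy z hz]; exact sub_mem hxyz hxzy
  · rw [A.super_oo x y hy z hz]; exact add_mem hxyz hxzy

variable (A) in
theorem isGraded_top : A.IsGraded ⊤ := by
  rw [IsGraded, top_inf_eq, top_inf_eq]
  exact A.compl.sup_eq_top

variable (A) in
theorem prodSpan_eq_map₂ (S T : Submodule ℂ V) : A.prodSpan S T = map₂ A.br S T := by
  rw [map₂_eq_span_image2, prodSpan]
  congr 1
  ext z
  simp [Set.mem_image2, eq_comm]

theorem map₂_le_of_isHomogeneous {P : Type*} [AddCommGroup P] [Module ℂ P]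
    (f : V →ₗ[ℂ] V →ₗ[ℂ] P) {S T : Submodule ℂ V} (hS : A.IsGraded S) (hT : A.IsGraded T)
    {W : Submodule ℂ P}
    (h : ∀ y ∈ S, ∀ z ∈ T, A.IsHomogeneous y → A.IsHomogeneous z → f y z ∈ W) :
    map₂ f S T ≤ W := by
  refine (map₂_le_map₂ hS.ge hT.ge).trans ?_
  simp only [map₂_sup_left, map₂_sup_right]
  refine sup_le (sup_le ?_ ?_) (sup_le ?_ ?_) <;> refine map₂_le.2 fun y ⟨hyS, hy⟩ z ⟨hzT, hz⟩ => ?_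
  exacts [h y hyS z hzT (.inl hy) (.inl hz), h y hyS z hzT (.inr hy) (.inl hz),
    h y hyS z hzT (.inl hy) (.inr hz), h y hyS z hzT (.inr hy) (.inr hz)]

theorem IsGraded.prodSpan {S T : Submodule ℂ V} (hS : A.IsGraded S) (hT : A.IsGraded T) :
    A.IsGraded (A.prodSpan S T) := by
  refine le_antisymm (sup_le inf_le_left inf_le_left) ?_
  rw [prodSpan_eq_map₂]
  refine map₂_le_of_isHomogeneous A.br hS hT fun y hy z hz hyh hzh => ?_
  have hyz := apply_mem_map₂ A.br hy hz
  rcases hyh.br hzh with h | h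
  exacts [mem_sup_left ⟨hyz, h⟩, mem_sup_right ⟨hyz, h⟩]

variable (A) in
theorem isGraded_lcs (k : ℕ) : A.IsGraded (A.lcs k) := by
  induction k with
  | zero => exact A.isGraded_top
  | succ k ih => exact ih.prodSpan A.isGraded_top

variable (A) in
theorem lcs_zero : A.lcs 0 = ⊤ := rfl

variable (A) in
theorem lcs_succ_eq_map₂ (k : ℕ) : A.lcs (k + 1) = map₂ A.br (A.lcs k) ⊤ :=
  A.prodSpan_eq_map₂ _ _

theorem br_mem_lcs_succ {k : ℕ} {u : V} (hu : u ∈ A.lcs k) (v : V) : A.br u v ∈ A.lcs (k + 1) :=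
  A.lcs_succ_eq_map₂ k ▸ apply_mem_map₂ A.br hu mem_top

variable (A) in
theorem lcs_succ_le (k : ℕ) : A.lcs (k + 1) ≤ A.lcs k := by
  induction k with
  | zero => exact le_top
  | succ k ih =>
    rw [lcs_succ_eq_map₂ A (k + 1)]
    exact map₂_le.2 fun u hu v _ => br_mem_lcs_succ (ih hu) v

theorem br_mem_lcs {a b : ℕ} {u v : V} (hu : u ∈ A.lcs a) (hv : v ∈ A.lcs b) :
    A.br u v ∈ A.lcs (a + b + 1) := by
  induction b generalizing a u v with
  | zero => exact br_mem_lcs_succ hu v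
  | succ b ih =>
    suffices A.lcs (b + 1) ≤ (A.lcs (a + (b + 1) + 1)).comap (A.br u) from this hv
    rw [lcs_succ_eq_map₂]
    refine map₂_le_of_isHomogeneous A.br (A.isGraded_lcs b) A.isGraded_top fun y hy z _ hyh hzh =>
      br_br_mem_of_isHomogeneous u hyh hzh (br_mem_lcs_succ (ih hu hy) z) ?_
    have := ih (br_mem_lcs_succ hu z) hy
    rwa [show a + 1 + b + 1 = a + (b + 1) + 1 by omega] at this

theorem lcs_succ_le_span_singleton_sup {x e : V} {k : ℕ} (hx : ⊤ ≤ (ℂ ∙ x) ⊔ A.lcs 1)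
    (he : e ∈ A.lcs k) (hk : A.lcs k ≤ (ℂ ∙ e) ⊔ A.lcs (k + 1)) :
    A.lcs (k + 1) ≤ (ℂ ∙ A.R x e) ⊔ A.lcs (k + 2) := by
  calc A.lcs (k + 1) = map₂ A.br (A.lcs k) ⊤ := A.lcs_succ_eq_map₂ k
    _ ≤ map₂ A.br ((ℂ ∙ e) ⊔ A.lcs (k + 1)) ((ℂ ∙ x) ⊔ A.lcs 1) := map₂_le_map₂ hk hx
    _ ≤ (ℂ ∙ A.R x e) ⊔ A.lcs (k + 2) := by
      rw [map₂_sup_left, map₂_sup_right, map₂_span_span, Set.image2_singleton]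
      refine sup_le (sup_le le_sup_left (le_sup_of_le_right ?_)) (le_sup_of_le_right ?_)
      · exact map₂_le.2 fun u hu v hv =>
          br_mem_lcs ((span_singleton_le_iff_mem e _).2 he hu) hv
      · exact map₂_le.2 fun u hu v _ => br_mem_lcs_succ hu v

theorem R_iterate_mem_lcs (x : V) (k : ℕ) : (A.R x)^[k] x ∈ A.lcs k := by
  induction k with
  | zero => exact mem_top
  | succ k ih =>
    rw [Function.iterate_succ_apply']
    exact br_mem_lcs_succ ih x

theorem lcs_le_span_R_iterate_sup {x : V} (hx : ⊤ ≤ (ℂ ∙ x) ⊔ A.lcs 1) (k : ℕ) :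
    A.lcs k ≤ (ℂ ∙ (A.R x)^[k] x) ⊔ A.lcs (k + 1) := by
  induction k with
  | zero => exact hx
  | succ k ih =>
    rw [Function.iterate_succ_apply']
    exact lcs_succ_le_span_singleton_sup hx (R_iterate_mem_lcs x k) ih

theorem R_iterate_mem_L0 {x : V} (hx : x ∈ A.L0) (k : ℕ) : (A.R x)^[k] x ∈ A.L0 := by
  induction k with
  | zero => exact hx
  | succ k ih =>
    rw [Function.iterate_succ_apply']
    exact A.grade00 _ ih x hx

theorem R_iterate_mem_of_mem_L1 {x : V} (hx : x ∈ A.L1) (k : ℕ) :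
    (Even k → (A.R x)^[k] x ∈ A.L1) ∧ (Odd k → (A.R x)^[k] x ∈ A.L0) := by
  induction k with
  | zero => exact ⟨fun _ => hx, fun h => absurd h Nat.not_odd_zero⟩
  | succ k ih =>
    rw [Function.iterate_succ_apply', Nat.even_add_one, Nat.odd_add_one, Nat.not_even_iff_odd,
      Nat.not_odd_iff_even]
    exact ⟨fun h => A.grade01 _ (ih.2 h) x hx, fun h => A.grade11 _ (ih.1 h) x hx⟩

theorem lcs_inf_L1_eq_of_R_iterate_mem_L0 {x : V} (hx : ⊤ ≤ (ℂ ∙ x) ⊔ A.lcs 1) {k : ℕ}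
    (hk : (A.R x)^[k] x ∈ A.L0) : A.lcs k ⊓ A.L1 = A.lcs (k + 1) ⊓ A.L1 :=
  inf_eq_inf_of_le_span_singleton_sup A.compl.disjoint (A.isGraded_lcs (k + 1)) hk
    (A.lcs_succ_le k) (lcs_le_span_R_iterate_sup hx k)

theorem lcs_inf_L0_eq_of_R_iterate_mem_L1 {x : V} (hx : ⊤ ≤ (ℂ ∙ x) ⊔ A.lcs 1) {k : ℕ}
    (hk : (A.R x)^[k] x ∈ A.L1) : A.lcs k ⊓ A.L0 = A.lcs (k + 1) ⊓ A.L0 :=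
  inf_eq_inf_of_le_span_singleton_sup A.compl.symm.disjoint
    ((sup_comm _ _).trans (A.isGraded_lcs (k + 1))) hk (A.lcs_succ_le k)
    (lcs_le_span_R_iterate_sup hx k)

theorem L1_le_lcs_of_mem_L0 {x : V} (hx0 : x ∈ A.L0) (hx : ⊤ ≤ (ℂ ∙ x) ⊔ A.lcs 1) (k : ℕ) :
    A.L1 ≤ A.lcs k := by
  induction k with
  | zero => exact le_top
  | succ k ih =>
    calc A.L1 = A.lcs k ⊓ A.L1 := (inf_eq_right.2 ih).symm
      _ = A.lcs (k + 1) ⊓ A.L1 := lcs_inf_L1_eq_of_R_iterate_mem_L0 hx (R_iterate_mem_L0 hx0 k)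
      _ ≤ A.lcs (k + 1) := inf_le_left

theorem lcs_add_eq_of_lcs_succ_eq {k : ℕ} (h : A.lcs (k + 1) = A.lcs k) (j : ℕ) :
    A.lcs (k + j) = A.lcs k := by
  induction j with
  | zero => rfl
  | succ j ih =>
    change A.prodSpan (A.lcs (k + j)) ⊤ = A.lcs k
    rw [ih]
    exact h

theorem lcs_succ_lt {N k : ℕ} (h1 : A.lcs (N - 1) ≠ ⊥) (h2 : A.lcs N = ⊥) (hk : k < N) :
    A.lcs (k + 1) < A.lcs k := by
  refine (A.lcs_succ_le k).lt_of_ne fun h => h1 ?_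
  have e1 := lcs_add_eq_of_lcs_succ_eq h (N - 1 - k)
  have e2 := lcs_add_eq_of_lcs_succ_eq h (N - k)
  rw [show k + (N - 1 - k) = N - 1 by omega] at e1
  rw [show k + (N - k) = N by omega] at e2
  rw [e1, ← e2, h2]

variable [FiniteDimensional ℂ V]

theorem finrank_lcs_add_eq {N k : ℕ} (hN : finrank ℂ V = N) (h1 : A.lcs (N - 1) ≠ ⊥)
    (h2 : A.lcs N = ⊥) (hk : k ≤ N) : finrank ℂ (A.lcs k) + k = N := by
  have hlt : ∀ i < N, finrank ℂ (A.lcs (i + 1)) < finrank ℂ (A.lcs i) := fun i hi =>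
    finrank_lt_finrank_of_lt (lcs_succ_lt h1 h2 hi)
  have hle : finrank ℂ (A.lcs k) + k ≤ finrank ℂ (A.lcs 0) :=
    add_le_of_forall_apply_succ_lt (f := fun i => finrank ℂ (A.lcs i)) fun i hi => hlt i (by omega)
  have hge : finrank ℂ (A.lcs (k + (N - k))) + (N - k) ≤ finrank ℂ (A.lcs (k + 0)) :=
    add_le_of_forall_apply_succ_lt (f := fun i => finrank ℂ (A.lcs (k + i))) fun i hi =>
      hlt (k + i) (by omega)
  have h0 : finrank ℂ (A.lcs 0) = N := by rw [lcs_zero, finrank_top, hN]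
  rw [show k + (N - k) = N by omega, h2, finrank_bot, add_zero] at hge
  omega

theorem exists_isHomogeneous_top_le_span_singleton_sup {S : Submodule ℂ V} (hS : A.IsGraded S)
    (h : finrank ℂ V ≤ finrank ℂ S + 1) : ∃ x, A.IsHomogeneous x ∧ ⊤ ≤ (ℂ ∙ x) ⊔ S := by
  have hsum := finrank_inf_add_finrank_inf_eq A.compl.disjoint hS
  have hV := finrank_add_eq_of_isCompl A.compl
  have h0 : finrank ℂ (S ⊓ A.L0 : Submodule ℂ V) ≤ finrank ℂ A.L0 := finrank_mono inf_le_right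
  have h1 : finrank ℂ (S ⊓ A.L1 : Submodule ℂ V) ≤ finrank ℂ A.L1 := finrank_mono inf_le_right
  rw [← A.compl.sup_eq_top]
  by_cases hd : finrank ℂ A.L0 ≤ finrank ℂ (S ⊓ A.L0 : Submodule ℂ V)
  · have hL0 : A.L0 ≤ S := inf_eq_right.1 (eq_of_le_of_finrank_le inf_le_right hd)
    obtain ⟨x, hx, hL1⟩ := exists_le_span_singleton_sup (inf_le_right : S ⊓ A.L1 ≤ A.L1)
      (by omega)
    exact ⟨x, .inr hx, sup_le (hL0.trans le_sup_right) (hL1.trans (sup_le_sup_left inf_le_left _))⟩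
  · have hL1 : A.L1 ≤ S := inf_eq_right.1 (eq_of_le_of_finrank_le inf_le_right (by omega))
    obtain ⟨x, hx, hL0⟩ := exists_le_span_singleton_sup (inf_le_right : S ⊓ A.L0 ≤ A.L0)
      (by omega)
    exact ⟨x, .inl hx, sup_le (hL0.trans (sup_le_sup_left inf_le_left _)) (hL1.trans le_sup_right)⟩

theorem finrank_L1_eq_and_finrank_L0_eq_of_mem_L1 {x : V} {N : ℕ} (hx1 : x ∈ A.L1)
    (hx : ⊤ ≤ (ℂ ∙ x) ⊔ A.lcs 1)
    (hdrop : ∀ k < N, finrank ℂ (A.lcs k) = finrank ℂ (A.lcs (k + 1)) + 1) (hN : A.lcs N = ⊥) :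
    finrank ℂ A.L1 = (N + 1) / 2 ∧ finrank ℂ A.L0 = N / 2 := by
  set d0 := fun k => finrank ℂ (A.lcs k ⊓ A.L0 : Submodule ℂ V)
  set d1 := fun k => finrank ℂ (A.lcs k ⊓ A.L1 : Submodule ℂ V)
  have hsum (k : ℕ) : d0 k + d1 k = finrank ℂ (A.lcs k) :=
    finrank_inf_add_finrank_inf_eq A.compl.disjoint (A.isGraded_lcs k)
  have hparity (k : ℕ) : (Even k → d0 k = d0 (k + 1)) ∧ (Odd k → d1 k = d1 (k + 1)) :=
    ⟨fun hk => congrArg (fun S : Submodule ℂ V => finrank ℂ S)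
        (lcs_inf_L0_eq_of_R_iterate_mem_L1 hx ((R_iterate_mem_of_mem_L1 hx1 k).1 hk)),
      fun hk => congrArg (fun S : Submodule ℂ V => finrank ℂ S)
        (lcs_inf_L1_eq_of_R_iterate_mem_L0 hx ((R_iterate_mem_of_mem_L1 hx1 k).2 hk))⟩
  have hcount : ∀ k ≤ N, d1 0 = d1 k + (k + 1) / 2 ∧ d0 0 = d0 k + k / 2 := by
    intro k
    induction k with
    | zero => simp
    | succ k ih =>
      intro hk
      have := ih (by omega)
      have := hsum k
      have := hsum (k + 1)
      have := hdrop k hk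
      rcases Nat.even_or_odd k with hk' | hk'
      · have := (hparity k).1 hk'
        obtain ⟨j, rfl⟩ := hk'
        omega
      · have := (hparity k).2 hk'
        obtain ⟨j, rfl⟩ := hk'
        omega
  have hbot (p : Submodule ℂ V) : finrank ℂ (A.lcs N ⊓ p : Submodule ℂ V) = 0 := by
    rw [hN, bot_inf_eq, finrank_bot]
  have htop (p : Submodule ℂ V) : finrank ℂ (A.lcs 0 ⊓ p : Submodule ℂ V) = finrank ℂ p := by
    rw [lcs_zero, top_inf_eq]
  obtain ⟨h1, h0⟩ := hcount N le_rfl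
  simp only [d0, d1, hbot, htop, zero_add] at h1 h0
  exact ⟨h1, h0⟩

end LeibnizSuperAlg

open LeibnizSuperAlg in
/-- If a complex Leibniz superalgebra with `dim L₀ = n`, `dim L₁ = m ≥ 1`
has nilindex `n + m + 1` (`L^{n+m} ≠ 0`, `L^{n+m+1} = 0`), then `m = n` or `m = n + 1`;
precisely, `m = n` when `n + m` is even and `m = n + 1` when `n + m` is odd. -/
theorem statement9 {V : Type*} [AddCommGroup V] [Module ℂ V] [FiniteDimensional ℂ V]
    (A : LeibnizSuperAlg V) (n m : ℕ)
    (hn : Module.finrank ℂ A.L0 = n) (hm : Module.finrank ℂ A.L1 = m) (hm1 : 1 ≤ m)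
    (h1 : A.lcs (n + m - 1) ≠ ⊥) (h2 : A.lcs (n + m) = ⊥) :
    (m = n ∨ m = n + 1) ∧ (Even (n + m) → m = n) ∧ (Odd (n + m) → m = n + 1) := by
  have hN : finrank ℂ V = n + m := by rw [← hn, ← hm, finrank_add_eq_of_isCompl A.compl]
  have hdim (k : ℕ) (hk : k ≤ n + m) : finrank ℂ (A.lcs k) + k = n + m :=
    finrank_lcs_add_eq hN h1 h2 hk
  obtain ⟨x, hx0 | hx1, hx⟩ := exists_isHomogeneous_top_le_span_singleton_sup (A.isGraded_lcs 1)
    (by have := hdim 1 (by omega); omega)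
  · have hL1 : A.L1 = ⊥ := le_bot_iff.1 (h2 ▸ L1_le_lcs_of_mem_L0 hx0 hx (n + m))
    rw [hL1, finrank_bot] at hm
    omega
  · obtain ⟨hm', hn'⟩ := finrank_L1_eq_and_finrank_L0_eq_of_mem_L1 hx1 hx
      (fun k hk => by have := hdim k (by omega); have := hdim (k + 1) hk; omega) h2
    rw [hm] at hm'
    rw [hn] at hn'
    refine ⟨by omega, fun h => ?_, fun h => ?_⟩
    · rw [Nat.even_iff] at h; omega
    · rw [Nat.odd_iff] at h; omega
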